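/- Let J be the exceptional Jordan algebra over a composition algebra O (char k ≠ 2,3). For α ∈ O×, the map d₁(α) sending X = [[s₁,x₃,x̄₂],[x̄₃,s₂,x₁],[x₂,x̄₁,s₃]] to [[N(α)s₁, x₃ᾱ, x̄₂α],[αx̄₃, s₂, αx₁α/N(α)],[ᾱx₂, (αx₁α)‾/N(α), s₃]] satisfies det(d₁(α)(X)) = N(α)·det(X). In particular d₁(α) preserves det when N(α) = 1. -/
import Mathlib


/-- A composition algebra over a field `k`: a unital (not necessarily associative)
`k`-algebra equipped with a nondegenerate multiplicative quadratic form `N`. -/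
structure CompAlg (k : Type*) [Field k] (O : Type*) [NonAssocRing O] [Module k O] : Type _ where
  smul_mul : ∀ (c : k) (x y : O), (c • x) * y = c • (x * y)
  mul_smul' : ∀ (c : k) (x y : O), x * (c • y) = c • (x * y)
  N : QuadraticForm k O
  norm_mul : ∀ x y : O, N (x * y) = N x * N y
  nondeg : ∀ x : O, (∀ y : O, QuadraticMap.polar (⇑N) x y = 0) → x = 0

namespace CompAlg

variable {k O : Type*} [Field k] [NonAssocRing O] [Module k O]

/-- The trace of an element: `tr x = b(x, 1)` where `b` is the polar form of `N`. -/
def tr (C : CompAlg k O) (x : O) : k := QuadraticMap.polar (⇑C.N) x 1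

/-- Conjugation: `x̄ = tr(x)·1 - x`. -/
def conj (C : CompAlg k O) (x : O) : O := C.tr x • (1 : O) - x

end CompAlg

namespace CompAlg

variable {k O : Type*} [Field k] [NonAssocRing O] [Module k O]

/-- The cubic determinant of a 3×3 Hermitian matrix over O with diagonal
(s₁,s₂,s₃) and off-diagonal octonion entries x₁, x₂, x₃. -/
def jdet (C : CompAlg k O) (s₁ s₂ s₃ : k) (x₁ x₂ x₃ : O) : k :=
  s₁ * s₂ * s₃ + C.tr ((x₁ * x₂) * x₃) - s₁ * C.N x₁ - s₂ * C.N x₂ - s₃ * C.N x₃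

/-- The Hermitian 3×3 matrix over O determined by its diagonal scalars and
off-diagonal octonion entries. -/
def toMat (C : CompAlg k O) (s₁ s₂ s₃ : k) (x₁ x₂ x₃ : O) : Matrix (Fin 3) (Fin 3) O :=
  !![s₁ • (1 : O), x₃, C.conj x₂; C.conj x₃, s₂ • (1 : O), x₁; x₂, C.conj x₁, s₃ • (1 : O)]

end CompAlg

namespace CompAlg

variable {k O : Type*} [Field k] [NonAssocRing O] [Module k O] (C : CompAlg k O)

/-- The polar (bilinear) form of `N`. -/
def b (x y : O) : k := QuadraticMap.polar (⇑C.N) x y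

lemma b_def (x y : O) : C.b x y = C.N (x + y) - C.N x - C.N y := rfl

lemma b_comm (x y : O) : C.b x y = C.b y x := QuadraticMap.polar_comm _ x y

lemma b_add_left (x x' y : O) : C.b (x + x') y = C.b x y + C.b x' y :=
  C.N.polar_add_left x x' y

lemma b_add_right (x y y' : O) : C.b x (y + y') = C.b x y + C.b x y' :=
  C.N.polar_add_right x y y'

lemma b_sub_right (x y y' : O) : C.b x (y - y') = C.b x y - C.b x y' :=
  C.N.polar_sub_right x y y'

lemma b_smul_left (a : k) (x y : O) : C.b (a • x) y = a * C.b x y := by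
  rw [b, C.N.polar_smul_left]; rfl

lemma b_smul_right (a : k) (x y : O) : C.b x (a • y) = a * C.b x y := by
  rw [b, C.N.polar_smul_right]; rfl

lemma b_ext {x y : O} (h : ∀ z, C.b x z = C.b y z) : x = y := by
  have h0 : ∀ z, QuadraticMap.polar (⇑C.N) (x - y) z = 0 := by
    intro z
    have h1 : QuadraticMap.polar (⇑C.N) (x - y) z
        = QuadraticMap.polar (⇑C.N) x z - QuadraticMap.polar (⇑C.N) y z :=
      C.N.polar_sub_left x y z
    rw [h1, show QuadraticMap.polar (⇑C.N) x z = QuadraticMap.polar (⇑C.N) y z from h z,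
      sub_self]
  exact sub_eq_zero.mp (C.nondeg (x - y) h0)

lemma tr_eq_b (x : O) : C.tr x = C.b x 1 := rfl

lemma b_one_left (x : O) : C.b 1 x = C.tr x := (C.b_comm 1 x).trans rfl

lemma norm_add (x y : O) : C.N (x + y) = C.N x + C.N y + C.b x y := by
  rw [b_def]; ring

/-- `b(xy, xw) = N(x) b(y,w)`. -/
lemma b_mul_left (x y w : O) : C.b (x * y) (x * w) = C.N x * C.b y w := by
  simp only [b_def, ← mul_add, C.norm_mul]
  ring

/-- `b(xy, zy) = N(y) b(x,z)`. -/
lemma b_mul_right (x z y : O) : C.b (x * y) (z * y) = C.N y * C.b x z := by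
  simp only [b_def, ← add_mul, C.norm_mul]
  ring

/-- The exchange identity: `b(xy, zw) + b(zy, xw) = b(x,z) b(y,w)`. -/
lemma b_exchange (x y z w : O) :
    C.b (x * y) (z * w) + C.b (z * y) (x * w) = C.b x z * C.b y w := by
  have h := C.b_mul_left (x + z) y w
  rw [add_mul, add_mul, C.b_add_left, C.b_add_right, C.b_add_right,
    C.b_mul_left, C.b_mul_left, C.norm_add] at h
  linear_combination h

lemma b_eq_tr (x y : O) : C.b x y = C.tr x * C.tr y - C.tr (x * y) := by
  have h := C.b_exchange x y 1 1
  rw [mul_one, one_mul, mul_one] at h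
  rw [C.b_comm y x] at h
  simp only [tr_eq_b]
  linear_combination h

lemma conj_mul_eq (x z : O) : C.conj x * z = C.tr x • z - x * z := by
  rw [conj, sub_mul, C.smul_mul, one_mul]

lemma mul_conj_eq (z y : O) : z * C.conj y = C.tr y • z - z * y := by
  rw [conj, mul_sub, C.mul_smul', mul_one]

/-- `b(xy, z) = b(y, x̄ z)`. -/
lemma b_adj_left (x y z : O) : C.b (x * y) z = C.b y (C.conj x * z) := by
  have h := C.b_exchange x y 1 z
  rw [one_mul, one_mul] at h
  rw [conj_mul_eq, C.b_sub_right, C.b_smul_right]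
  simp only [tr_eq_b] at *
  linear_combination h

/-- `b(xy, z) = b(x, z ȳ)`. -/
lemma b_adj_right (x y z : O) : C.b (x * y) z = C.b x (z * C.conj y) := by
  have h := C.b_exchange x y z 1
  rw [mul_one, mul_one] at h
  rw [mul_conj_eq, C.b_sub_right, C.b_smul_right]
  rw [C.b_comm (z * y) x] at h
  simp only [tr_eq_b] at *
  linear_combination h

lemma tr_assoc (x y z : O) : C.tr ((x * y) * z) = C.tr (x * (y * z)) := by
  have h1 : C.tr ((x * y) * z) = C.b (x * y) (C.conj z) := by
    rw [tr_eq_b, C.b_adj_right, one_mul]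
  have h2 : C.tr (x * (y * z)) = C.b (y * z) (C.conj x) := by
    rw [tr_eq_b, C.b_adj_left, mul_one, C.b_comm]
  rw [h1, h2, C.b_adj_left, C.b_adj_right]

lemma b_conj_right (w z : O) : C.b w (C.conj z) = C.tr (w * z) := by
  rw [conj, C.b_sub_right, C.b_smul_right]
  have h := C.b_eq_tr w z
  simp only [tr_eq_b] at *
  linear_combination -h

lemma tr_one (h1 : C.N 1 = 1) : C.tr 1 = 2 := by
  have : ((1 : O) + 1) = (2 : k) • (1 : O) := by
    rw [show (2 : k) = 1 + 1 by norm_num, add_smul, one_smul]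
  rw [tr_eq_b, b_def, this, QuadraticMap.map_smul, smul_eq_mul, h1]
  norm_num

lemma tr_conj (h1 : C.N 1 = 1) (x : O) : C.tr (C.conj x) = C.tr x := by
  rw [conj, tr_eq_b, b, C.N.polar_sub_left, C.N.polar_smul_left, smul_eq_mul]
  have := C.tr_one h1
  rw [tr_eq_b, b] at *
  rw [this]
  ring

lemma conj_conj (h1 : C.N 1 = 1) (x : O) : C.conj (C.conj x) = x := by
  rw [conj, C.tr_conj h1, conj, sub_sub_cancel]

lemma norm_conj (h1 : C.N 1 = 1) (x : O) : C.N (C.conj x) = C.N x := by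
  have hx : C.conj x = C.tr x • (1 : O) + (-x) := by rw [conj, sub_eq_add_neg]
  rw [hx, C.norm_add, QuadraticMap.map_smul, C.N.map_neg, C.b_smul_left, smul_eq_mul, h1]
  have : C.b 1 (-x) = -C.tr x := by
    rw [b, C.N.polar_neg_right, ← b, C.b_one_left]
  rw [this]
  ring

/-- `x̄ (x y) = N(x) y`. -/
lemma conj_mul_mul (h1 : C.N 1 = 1) (x y : O) :
    C.conj x * (x * y) = C.N x • y := by
  apply C.b_ext
  intro z
  rw [C.b_adj_left, C.conj_conj h1, C.b_mul_left, C.b_smul_left]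

/-- `(y x) x̄ = N(x) y`. -/
lemma mul_mul_conj (h1 : C.N 1 = 1) (x y : O) :
    (y * x) * C.conj x = C.N x • y := by
  apply C.b_ext
  intro z
  rw [C.b_adj_right, C.conj_conj h1, C.b_mul_right, C.b_smul_left]

/-- Conjugation is an anti-automorphism. -/
lemma conj_mul (h1 : C.N 1 = 1) (x y : O) :
    C.conj (x * y) = C.conj y * C.conj x := by
  apply C.b_ext
  intro z
  rw [C.b_adj_left, C.conj_conj h1]
  have hL : C.b (C.conj (x * y)) z = C.tr ((x * y) * z) := by
    rw [conj, b, C.N.polar_sub_left, C.N.polar_smul_left, smul_eq_mul, ← b, ← b,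
      C.b_one_left, C.b_eq_tr]
    ring
  have hR : C.b (C.conj x) (y * z) = C.tr (x * (y * z)) := by
    rw [conj, b, C.N.polar_sub_left, C.N.polar_smul_left, smul_eq_mul, ← b, ← b,
      C.b_one_left, C.b_eq_tr]
    ring
  rw [hL, hR, C.tr_assoc]

/-- The key trace identity: `tr(((αx)α · ᾱy) · zᾱ) = N(α)² tr((xy)z)`. -/
lemma key_trace (h1 : C.N 1 = 1) (α x y z : O) :
    C.tr ((((α * x) * α) * (C.conj α * y)) * (z * C.conj α)) =
      C.N α * C.N α * C.tr ((x * y) * z) := by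
  have hcc := C.conj_conj h1
  have hNc := C.norm_conj h1 α
  rw [← C.b_conj_right, C.conj_mul h1, hcc]
  -- goal: b (((α*x)*α) * (conj α * y)) (α * conj z) = Nα * Nα * tr ((x*y)*z)
  have hex := C.b_exchange ((α * x) * α) (C.conj α * y) α (C.conj z)
  have h2 : α * (C.conj α * y) = C.N α • y := by
    have := C.conj_mul_mul h1 (C.conj α) y
    rwa [hcc, hNc] at this
  have h3 : C.b ((α * x) * α) α = C.N α * C.tr (α * x) := by
    have := C.b_mul_right (α * x) 1 α
    rwa [one_mul, ← tr_eq_b] at this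
  have h4 : C.b (C.conj α * y) (C.conj z) = C.b y (α * C.conj z) := by
    rw [C.b_adj_left, hcc]
  rw [h2, h3, h4, C.b_smul_left] at hex
  -- hex : b(X*(ᾱy), α*z̄) + Nα * b y (X * z̄) = Nα * tr(αx) * b y (α*z̄)
  have h5 : C.tr (α * x) • (α * C.conj z) - ((α * x) * α) * C.conj z
      = (C.conj (α * x) * α) * C.conj z := by
    rw [conj_mul_eq, sub_mul, C.smul_mul]
  have h6 : C.conj (α * x) * α = C.N α • C.conj x := by
    rw [C.conj_mul h1]
    have := C.mul_mul_conj h1 (C.conj α) (C.conj x)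
    rwa [hcc, hNc] at this
  have h7 : C.b y ((C.N α • C.conj x) * C.conj z) = C.N α * C.tr ((x * y) * z) := by
    rw [C.smul_mul, C.b_smul_right, ← C.b_adj_left, C.b_conj_right]
  have h8 : C.b y (C.tr (α * x) • (α * C.conj z) - ((α * x) * α) * C.conj z)
      = C.N α * C.tr ((x * y) * z) := by
    rw [h5, h6, h7]
  rw [C.b_sub_right, C.b_smul_right] at h8
  linear_combination hex + C.N α * h8

end CompAlg

/-- For invertible α ∈ O, the map d₁(α) on the exceptional Jordan algebra,
sending the Hermitian matrix with data (s₁,s₂,s₃,x₁,x₂,x₃) to the one with data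
(N(α)s₁, s₂, s₃, (αx₁α)/N(α), ᾱx₂, x₃ᾱ), multiplies the cubic determinant by
N(α). (char k ≠ 2, 3) -/
theorem jordan_d1_det {k O : Type*} [Field k] [NonAssocRing O] [Module k O]
    (C : CompAlg k O) (h2 : (2 : k) ≠ 0) (h3 : (3 : k) ≠ 0)
    (α : O) (hα : C.N α ≠ 0) (s₁ s₂ s₃ : k) (x₁ x₂ x₃ : O) :
    C.jdet (C.N α * s₁) s₂ s₃ ((C.N α)⁻¹ • ((α * x₁) * α)) (C.conj α * x₂)
        (x₃ * C.conj α) =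
      C.N α * C.jdet s₁ s₂ s₃ x₁ x₂ x₃ ∧
    (C.N α = 1 →
      C.jdet (C.N α * s₁) s₂ s₃ ((C.N α)⁻¹ • ((α * x₁) * α)) (C.conj α * x₂)
          (x₃ * C.conj α) =
        C.jdet s₁ s₂ s₃ x₁ x₂ x₃) := by
  have h1 : C.N 1 = 1 := by
    have h := C.norm_mul α 1
    rw [mul_one] at h
    have h' : C.N α * 1 = C.N α * C.N 1 := by rw [mul_one]; exact h
    exact (mul_left_cancel₀ hα h').symm
  have hNc := C.norm_conj h1 α
  have key := C.key_trace h1 α x₁ x₂ x₃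
  have htr : C.tr ((((C.N α)⁻¹ • ((α * x₁) * α)) * (C.conj α * x₂)) * (x₃ * C.conj α))
      = (C.N α)⁻¹ * (C.N α * C.N α * C.tr ((x₁ * x₂) * x₃)) := by
    rw [C.smul_mul, C.smul_mul, C.tr_eq_b, C.b_smul_left, ← C.tr_eq_b, key]
  have hN1 : C.N ((C.N α)⁻¹ • ((α * x₁) * α)) = C.N x₁ := by
    rw [QuadraticMap.map_smul, smul_eq_mul, C.norm_mul, C.norm_mul]
    field_simp
  have hN2 : C.N (C.conj α * x₂) = C.N α * C.N x₂ := by rw [C.norm_mul, hNc]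
  have hN3 : C.N (x₃ * C.conj α) = C.N x₃ * C.N α := by rw [C.norm_mul, hNc]
  have main : C.jdet (C.N α * s₁) s₂ s₃ ((C.N α)⁻¹ • ((α * x₁) * α)) (C.conj α * x₂)
        (x₃ * C.conj α) = C.N α * C.jdet s₁ s₂ s₃ x₁ x₂ x₃ := by
    rw [CompAlg.jdet, CompAlg.jdet, htr, hN1, hN2, hN3]
    field_simp
  exact ⟨main, fun hone => by rw [main, hone, one_mul]⟩
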